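/- arXiv:1602.08508 — 3 statements merged into one kernel-verified Lean document; each statement's English description precedes it below -/
import Mathlib

section
/- Let 0 < v_ji < v_ik and d_ji, d_ik > 0. For any δ satisfying 0 < δ < min{(v_ik - v_ji)/d_ik, (v_ik - v_ji)/d_ji, (v_ik² - v_ji²)/(v_ji·d_ik + v_ik·d_ji)}, the total travel time strictly decreases: d_ji/(v_ji + d_ik·δ) + d_ik/(v_ik - d_ji·δ) < d_ji/v_ji + d_ik/v_ik. -/
/-!
Moving the speeds toward each other by `d_ik δ` and `d_ji δ` saves `d_ji d_ik δ / (v_ji (v_ji + d_ik δ))`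
on the slow arc and costs `d_ji d_ik δ / (v_ik (v_ik - d_ji δ))` on the fast one. The cost is smaller
than the saving exactly when `v_ji (v_ji + d_ik δ) < v_ik (v_ik - d_ji δ)`, which is a rearrangement
of `δ (v_ji d_ik + v_ik d_ji) < v_ik² - v_ji²`.
-/

lemma div_add_div_sub_lt {a b x y δ : ℝ} (ha : 0 < a) (hb : 0 < b) (hx : 0 < x) (hy : 0 < y)
    (hδ : 0 < δ) (h : a * (a + y * δ) < b * (b - x * δ)) :
    x / (a + y * δ) + y / (b - x * δ) < x / a + y / b := by
  have hay : 0 < a + y * δ := by positivity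
  have hbx : 0 < b - x * δ := pos_of_mul_pos_right ((mul_pos ha hay).trans h) hb.le
  have saving : x / a - x / (a + y * δ) = x * y * δ / (a * (a + y * δ)) := by
    field_simp
    ring
  have cost : y / (b - x * δ) - y / b = x * y * δ / (b * (b - x * δ)) := by
    field_simp
    ring
  have cost_lt_saving : x * y * δ / (b * (b - x * δ)) < x * y * δ / (a * (a + y * δ)) :=
    div_lt_div_of_pos_left (by positivity) (by positivity) h
  linarith

lemma mul_add_lt_mul_sub_of_lt_div {a b x y δ : ℝ} (hden : 0 < a * y + b * x)
    (h : δ < (b ^ 2 - a ^ 2) / (a * y + b * x)) :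
    a * (a + y * δ) < b * (b - x * δ) := by
  linear_combination (lt_div_iff₀ hden).mp h

theorem stmt_1 (vji vik dji dik δ : ℝ)
    (hvji : 0 < vji) (hv : vji < vik)
    (hdji : 0 < dji) (hdik : 0 < dik)
    (hδ : 0 < δ)
    (hδlt : δ < min (min ((vik - vji) / dik) ((vik - vji) / dji))
      ((vik ^ 2 - vji ^ 2) / (vji * dik + vik * dji))) :
    dji / (vji + dik * δ) + dik / (vik - dji * δ)
      < dji / vji + dik / vik := by
  have hvik : 0 < vik := hvji.trans hv
  have key : vji * (vji + dik * δ) < vik * (vik - dji * δ) :=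
    mul_add_lt_mul_sub_of_lt_div (by positivity) (hδlt.trans_le (min_le_right _ _))
  exact div_add_div_sub_lt hvji hvik hdji hdik hδ key
end

section
/- Let D¹, D² > 0 and define β(v) = D¹·v/D² (the case δ = 0 of β(v) = D¹/(D²/v + δ)). Let f be strictly convex differentiable with f' ≥ 0 and f' strictly increasing on [v_F, u], and define H(v) = D¹·f(β(v)) - D²·f(v) on [vᵐⁱⁿ, vᵐᵃˣ] ⊆ [v_F, u] with vᵐⁱⁿ > 0 and β(v) ∈ [v_F, u] for all v in the interval. Then: if D¹ > D², H is strictly increasing (so its maximum over the interval is attained at vᵐᵃˣ); if D¹ < D², H is strictly decreasing (maximum at vᵐⁱⁿ); if D¹ = D², H is constant. -/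
/-! The proof is by differentiation. Writing `k = D₁ / D₂`, the derivative of `H` at `v` is
`D₁ k f'(k v) - D₂ f'(v) = D₂ (k² f'(k v) - f'(v))`. If `k > 1` then `k v > v > 0`, so
`k² f'(k v) ≥ f'(k v) > f'(v)` because `f' ≥ 0` and `f'` is strictly increasing; if `k < 1` both
inequalities reverse. If `k = 1` then `H` vanishes identically. -/

/-- The paper's `H`, with `a = D¹`, `b = D²` and `β v = a v / b`. -/
noncomputable def costDiff (f : ℝ → ℝ) (a b v : ℝ) : ℝ := a * f (a * v / b) - b * f v

section costDiff

variable {f : ℝ → ℝ} {a b : ℝ}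

theorem hasDerivAt_costDiff {v : ℝ} (hfβ : DifferentiableAt ℝ f (a * v / b))
    (hf : DifferentiableAt ℝ f v) :
    HasDerivAt (costDiff f a b) (a * (a / b) * deriv f (a * v / b) - b * deriv f v) v := by
  have hβ : HasDerivAt (fun v => a * v / b) (a / b) v := by
    simpa using ((hasDerivAt_id v).const_mul a).div_const b
  exact (((hfβ.hasDerivAt.comp v hβ).const_mul a).sub (hf.hasDerivAt.const_mul b)).congr_deriv
    (by ring)

theorem continuous_costDiff (hf : Differentiable ℝ f) : Continuous (costDiff f a b) :=
  continuous_iff_continuousAt.2 fun v =>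
    (hasDerivAt_costDiff (hf _) (hf v)).continuousAt

theorem costDiff_self (ha : a ≠ 0) (v : ℝ) : costDiff f a a v = 0 := by
  simp [costDiff, mul_div_cancel_left₀ v ha]

theorem mul_div_mul_sub_pos_of_lt (hb : 0 < b) (hab : b < a) {p q : ℝ} (hp : 0 ≤ p)
    (hqp : q < p) : 0 < a * (a / b) * p - b * q := by
  have hsq : b ≤ a * (a / b) := by
    rw [← mul_div_assoc, le_div_iff₀ hb]
    nlinarith
  nlinarith [mul_le_mul_of_nonneg_right hsq hp]

theorem mul_div_mul_sub_neg_of_lt (ha : 0 < a) (hab : a < b) {p q : ℝ} (hp : 0 ≤ p)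
    (hpq : p < q) : a * (a / b) * p - b * q < 0 := by
  have hsq : a * (a / b) ≤ b := by
    rw [← mul_div_assoc, div_le_iff₀ (ha.trans hab)]
    nlinarith
  nlinarith [mul_le_mul_of_nonneg_right hsq hp]

variable {s t : Set ℝ} (hf : Differentiable ℝ f) (hs : Convex ℝ s) (hpos : ∀ v ∈ s, 0 < v)
  (hst : s ⊆ t) (hβ : ∀ v ∈ s, a * v / b ∈ t) (hderiv_nonneg : ∀ v ∈ t, 0 ≤ deriv f v)
  (hderiv_mono : StrictMonoOn (deriv f) t)
include hf hs hpos hst hβ hderiv_nonneg hderiv_mono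

theorem strictMonoOn_costDiff (hb : 0 < b) (hab : b < a) : StrictMonoOn (costDiff f a b) s := by
  refine strictMonoOn_of_deriv_pos hs (continuous_costDiff hf).continuousOn fun v hv => ?_
  have hvs := interior_subset hv
  have hv_lt : v < a * v / b := by
    rw [lt_div_iff₀ hb]
    nlinarith [hpos v hvs]
  rw [(hasDerivAt_costDiff (hf _) (hf v)).deriv]
  exact mul_div_mul_sub_pos_of_lt hb hab (hderiv_nonneg _ (hβ v hvs))
    (hderiv_mono (hst hvs) (hβ v hvs) hv_lt)

theorem strictAntiOn_costDiff (ha : 0 < a) (hab : a < b) : StrictAntiOn (costDiff f a b) s := by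
  refine strictAntiOn_of_deriv_neg hs (continuous_costDiff hf).continuousOn fun v hv => ?_
  have hvs := interior_subset hv
  have hv_lt : a * v / b < v := by
    rw [div_lt_iff₀ (ha.trans hab)]
    nlinarith [hpos v hvs]
  rw [(hasDerivAt_costDiff (hf _) (hf v)).deriv]
  exact mul_div_mul_sub_neg_of_lt ha hab (hderiv_nonneg _ (hβ v hvs))
    (hderiv_mono (hβ v hvs) (hst hvs) hv_lt)

end costDiff

theorem stmt_10_general (f : ℝ → ℝ) (vF u D₁ D₂ vmin vmax : ℝ)
    (hdiff : Differentiable ℝ f)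
    (hderiv_nonneg : ∀ v ∈ Set.Icc vF u, 0 ≤ deriv f v)
    (hderiv_mono : StrictMonoOn (deriv f) (Set.Icc vF u))
    (hD₁ : 0 < D₁) (hD₂ : 0 < D₂)
    (hvmin : 0 < vmin)
    (hsub : Set.Icc vmin vmax ⊆ Set.Icc vF u)
    (hβ : ∀ v ∈ Set.Icc vmin vmax, D₁ * v / D₂ ∈ Set.Icc vF u) :
    (D₂ < D₁ → StrictMonoOn (fun v => D₁ * f (D₁ * v / D₂) - D₂ * f v)
        (Set.Icc vmin vmax))
      ∧ (D₁ < D₂ → StrictAntiOn (fun v => D₁ * f (D₁ * v / D₂) - D₂ * f v)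
        (Set.Icc vmin vmax))
      ∧ (D₁ = D₂ → ∀ v ∈ Set.Icc vmin vmax, ∀ w ∈ Set.Icc vmin vmax,
        D₁ * f (D₁ * v / D₂) - D₂ * f v = D₁ * f (D₁ * w / D₂) - D₂ * f w) := by
  have hpos : ∀ v ∈ Set.Icc vmin vmax, 0 < v := fun v hv => hvmin.trans_le hv.1
  refine ⟨fun hlt => ?_, fun hlt => ?_, fun heq v _ w _ => ?_⟩
  · exact strictMonoOn_costDiff hdiff (convex_Icc _ _) hpos hsub hβ hderiv_nonneg hderiv_mono
      hD₂ hlt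
  · exact strictAntiOn_costDiff hdiff (convex_Icc _ _) hpos hsub hβ hderiv_nonneg hderiv_mono
      hD₁ hlt
  · subst heq
    exact (costDiff_self hD₁.ne' v).trans (costDiff_self hD₁.ne' w).symm

theorem stmt_10 (f : ℝ → ℝ) (vF u D₁ D₂ vmin vmax : ℝ)
    (hf : StrictConvexOn ℝ Set.univ f)
    (hdiff : Differentiable ℝ f)
    (hderiv_nonneg : ∀ v ∈ Set.Icc vF u, 0 ≤ deriv f v)
    (hderiv_mono : StrictMonoOn (deriv f) (Set.Icc vF u))
    (hD₁ : 0 < D₁) (hD₂ : 0 < D₂)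
    (hvmin : 0 < vmin) (hle : vmin ≤ vmax)
    (hsub : Set.Icc vmin vmax ⊆ Set.Icc vF u)
    (hβ : ∀ v ∈ Set.Icc vmin vmax, D₁ * v / D₂ ∈ Set.Icc vF u) :
    (D₂ < D₁ → StrictMonoOn (fun v => D₁ * f (D₁ * v / D₂) - D₂ * f v)
        (Set.Icc vmin vmax))
      ∧ (D₁ < D₂ → StrictAntiOn (fun v => D₁ * f (D₁ * v / D₂) - D₂ * f v)
        (Set.Icc vmin vmax))
      ∧ (D₁ = D₂ → ∀ v ∈ Set.Icc vmin vmax, ∀ w ∈ Set.Icc vmin vmax,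
        D₁ * f (D₁ * v / D₂) - D₂ * f v = D₁ * f (D₁ * w / D₂) - D₂ * f w) :=
  stmt_10_general f vF u D₁ D₂ vmin vmax hdiff hderiv_nonneg hderiv_mono hD₁ hD₂ hvmin hsub hβ
end

section
/- Let f be strictly convex differentiable with f' strictly increasing and f'(v_F) = 0, v_F > 0. Let D¹, D² > 0, δ ∈ ℝ, β(v) = D¹/(D²/v + δ), and H(v) = D¹·f(β(v)) - D²·f(v) on a closed interval [p, q] with 0 < p ≤ q, where for all v ∈ [p,q]: v ≥ v_F, β(v) ≥ v_F, and D²/v + δ > 0. Then the maximum of H over [p, q] is attained at p, at q, or at v* = (D¹-D²)/δ (when δ ≠ 0 and v* ∈ [p,q]). -/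
/-!
At an interior maximiser `c` of `H`, the derivative
`H'(c) = D₂ / c² · (β(c)² f'(β(c)) - c² f'(c))` vanishes. On `[v_F, ∞)` the derivative `f'` is
nonnegative and increasing, so `x ↦ x² f'(x)` is strictly increasing there and the equation forces
`β(c) = c`, i.e. `D₁ = D₂ + δ c`. For `δ ≠ 0` this says `c = (D₁ - D₂) / δ`; for `δ = 0` it says
`D₁ = D₂`, so `β` is the identity and `H` vanishes identically.
-/

open Set

/-- The map `β` of the paper. -/
noncomputable def dominanceMap (D₁ D₂ δ v : ℝ) : ℝ := D₁ / (D₂ / v + δ)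

/-- The function `H` of the paper. -/
noncomputable def dominanceGap (f : ℝ → ℝ) (D₁ D₂ δ v : ℝ) : ℝ :=
  D₁ * f (dominanceMap D₁ D₂ δ v) - D₂ * f v

lemma strictMonoOn_sq_mul {g : ℝ → ℝ} {a : ℝ} (hg : StrictMonoOn g (Ici a)) (ha : 0 ≤ a)
    (hga : 0 ≤ g a) : StrictMonoOn (fun x => x ^ 2 * g x) (Ici a) := by
  intro x hx y hy hxy
  have hx0 : 0 ≤ x := ha.trans hx
  have hgx : 0 ≤ g x := hga.trans (hg.monotoneOn self_mem_Ici hx hx)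
  calc x ^ 2 * g x ≤ y ^ 2 * g x := by gcongr
    _ < y ^ 2 * g y := by
      have : 0 < y := hx0.trans_lt hxy
      gcongr
      exact hg hx hy hxy

section

variable {D₁ D₂ δ v : ℝ}

lemma dominanceMap_eq_self_iff (hv : v ≠ 0) (hden : D₂ / v + δ ≠ 0) :
    dominanceMap D₁ D₂ δ v = v ↔ D₁ = D₂ + δ * v := by
  unfold dominanceMap
  rw [div_eq_iff hden]
  field_simp

lemma dominanceGap_self (f : ℝ → ℝ) {D : ℝ} (hD : D ≠ 0) :
    dominanceGap f D D 0 v = 0 := by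
  simp [dominanceGap, dominanceMap, div_div_cancel₀ hD]

lemma hasDerivAt_dominanceMap (hv : v ≠ 0) (hden : D₂ / v + δ ≠ 0) :
    HasDerivAt (dominanceMap D₁ D₂ δ)
      (D₂ * dominanceMap D₁ D₂ δ v ^ 2 / (D₁ * v ^ 2)) v := by
  have hinner : HasDerivAt (fun x => D₂ / x + δ) (-(D₂ / v ^ 2)) v := by
    simpa [div_eq_mul_inv] using ((hasDerivAt_inv hv).const_mul D₂).add_const δ
  refine ((hasDerivAt_const v D₁).div hinner hden).congr_deriv ?_
  unfold dominanceMap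
  field_simp
  ring

lemma hasDerivAt_dominanceGap {f : ℝ → ℝ} (hD₁ : D₁ ≠ 0) (hv : v ≠ 0)
    (hden : D₂ / v + δ ≠ 0) (hfβ : DifferentiableAt ℝ f (dominanceMap D₁ D₂ δ v))
    (hfv : DifferentiableAt ℝ f v) :
    HasDerivAt (dominanceGap f D₁ D₂ δ)
      (D₂ / v ^ 2 * (dominanceMap D₁ D₂ δ v ^ 2 * deriv f (dominanceMap D₁ D₂ δ v)
        - v ^ 2 * deriv f v)) v := by
  refine (((hfβ.hasDerivAt.comp v (hasDerivAt_dominanceMap hv hden)).const_mul D₁).sub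
    (hfv.hasDerivAt.const_mul D₂)).congr_deriv ?_
  field_simp

lemma dominanceMap_eq_self_of_isLocalMax {f : ℝ → ℝ} {vF : ℝ} (hf : Differentiable ℝ f)
    (hmono : StrictMonoOn (deriv f) (Ici vF)) (hvF : 0 < vF) (hvF' : 0 ≤ deriv f vF)
    (hD₁ : D₁ ≠ 0) (hD₂ : D₂ ≠ 0) (hv : vF ≤ v)
    (hβ : vF ≤ dominanceMap D₁ D₂ δ v) (hden : D₂ / v + δ ≠ 0)
    (hmax : IsLocalMax (dominanceGap f D₁ D₂ δ) v) :
    dominanceMap D₁ D₂ δ v = v := by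
  have hv0 : v ≠ 0 := (hvF.trans_le hv).ne'
  have hderiv := (hasDerivAt_dominanceGap hD₁ hv0 hden (hf _) (hf v)).deriv
  rw [hmax.deriv_eq_zero, eq_comm, mul_eq_zero, sub_eq_zero] at hderiv
  refine (strictMonoOn_sq_mul hmono hvF.le hvF').injOn hβ hv (hderiv.resolve_left ?_)
  positivity

end

theorem stmt_15_general (f : ℝ → ℝ) (vF D₁ D₂ δ p q : ℝ)
    (hdiff : Differentiable ℝ f)
    (hmono : StrictMono (deriv f))
    (hvF : 0 < vF) (hvF' : deriv f vF = 0)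
    (hD₁ : 0 < D₁) (hD₂ : 0 < D₂)
    (hpq : p ≤ q)
    (hdom : ∀ v ∈ Set.Icc p q,
      vF ≤ v ∧ vF ≤ D₁ / (D₂ / v + δ) ∧ 0 < D₂ / v + δ) :
    IsMaxOn (fun v => D₁ * f (D₁ / (D₂ / v + δ)) - D₂ * f v) (Set.Icc p q) p
      ∨ IsMaxOn (fun v => D₁ * f (D₁ / (D₂ / v + δ)) - D₂ * f v) (Set.Icc p q) q
      ∨ (δ ≠ 0 ∧ (D₁ - D₂) / δ ∈ Set.Icc p q ∧
        IsMaxOn (fun v => D₁ * f (D₁ / (D₂ / v + δ)) - D₂ * f v)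
          (Set.Icc p q) ((D₁ - D₂) / δ)) := by
  have hpos : ∀ v ∈ Icc p q, v ≠ 0 := fun v hv => (hvF.trans_le (hdom v hv).1).ne'
  have hcont : ContinuousOn (dominanceGap f D₁ D₂ δ) (Icc p q) := fun v hv =>
    (hasDerivAt_dominanceGap hD₁.ne' (hpos v hv) (hdom v hv).2.2.ne' (hdiff _)
      (hdiff v)).continuousAt.continuousWithinAt
  obtain ⟨c, hc, hmax⟩ := isCompact_Icc.exists_isMaxOn (nonempty_Icc.2 hpq) hcont
  rcases hc.1.eq_or_lt with rfl | hpc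
  · exact Or.inl hmax
  rcases hc.2.eq_or_lt with rfl | hcq
  · exact Or.inr (Or.inl hmax)
  obtain ⟨hcF, hβF, hden⟩ := hdom c hc
  have hfix := dominanceMap_eq_self_of_isLocalMax hdiff (hmono.strictMonoOn _) hvF hvF'.ge
    hD₁.ne' hD₂.ne' hcF hβF hden.ne' (hmax.isLocalMax (Icc_mem_nhds hpc hcq))
  have hD := (dominanceMap_eq_self_iff (hpos c hc) hden.ne').1 hfix
  by_cases hδ : δ = 0
  · subst hδ
    obtain rfl : D₁ = D₂ := by simpa using hD
    exact Or.inl <| isMaxOn_iff.2 fun v _ =>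
      (dominanceGap_self f hD₁.ne').trans_le (dominanceGap_self f hD₁.ne').ge
  · have hc' : (D₁ - D₂) / δ = c := by
      rw [div_eq_iff hδ]; linarith
    exact Or.inr (Or.inr ⟨hδ, hc' ▸ hc, hc' ▸ hmax⟩)

theorem stmt_15 (f : ℝ → ℝ) (vF D₁ D₂ δ p q : ℝ)
    (hf : StrictConvexOn ℝ Set.univ f)
    (hdiff : Differentiable ℝ f)
    (hmono : StrictMono (deriv f))
    (hvF : 0 < vF) (hvF' : deriv f vF = 0)
    (hD₁ : 0 < D₁) (hD₂ : 0 < D₂)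
    (hp : 0 < p) (hpq : p ≤ q)
    (hdom : ∀ v ∈ Set.Icc p q,
      vF ≤ v ∧ vF ≤ D₁ / (D₂ / v + δ) ∧ 0 < D₂ / v + δ) :
    IsMaxOn (fun v => D₁ * f (D₁ / (D₂ / v + δ)) - D₂ * f v) (Set.Icc p q) p
      ∨ IsMaxOn (fun v => D₁ * f (D₁ / (D₂ / v + δ)) - D₂ * f v) (Set.Icc p q) q
      ∨ (δ ≠ 0 ∧ (D₁ - D₂) / δ ∈ Set.Icc p q ∧
        IsMaxOn (fun v => D₁ * f (D₁ / (D₂ / v + δ)) - D₂ * f v)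
          (Set.Icc p q) ((D₁ - D₂) / δ)) :=
  stmt_15_general f vF D₁ D₂ δ p q hdiff hmono hvF hvF' hD₁ hD₂ hpq hdom
end
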